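/- arXiv:2007.04072 — 6 statements merged into one kernel-verified Lean document; each statement's English description precedes it below -/
import Mathlib

section
/- For every real constant A > 0 and c > 0, the gap between the convex upper approximation and the original function is uniformly bounded: for all p ≥ 0, G̃(p) − G(p) ≤ A·e^{−2}. -/
lemma key8 (c p : ℝ) (hc : 0 < c) (hp : 0 < p) (hpc : p ≤ c) :
    Real.exp (-1) * p / c - Real.exp (-c / p) ≤ Real.exp (-2) := by
  have hE : Real.exp (-1) = Real.exp (-2) * Real.exp 1 := by
    rw [← Real.exp_add]; norm_num
  have hx := Real.exp_pos (-c / p)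
  have h2pos := Real.exp_pos (-2 : ℝ)
  by_cases h : p * Real.exp 1 ≤ c
  · have h1 : Real.exp (-1) * p / c ≤ Real.exp (-2) := by
      rw [div_le_iff₀ hc, hE]
      calc Real.exp (-2) * Real.exp 1 * p = Real.exp (-2) * (p * Real.exp 1) := by ring
        _ ≤ Real.exp (-2) * c := by
            exact mul_le_mul_of_nonneg_left h h2pos.le
    linarith
  · push_neg at h
    have h1 : Real.exp (-2) * (3 - c / p) ≤ Real.exp (-c / p) := by
      have ha := Real.add_one_le_exp (2 - c / p)
      calc Real.exp (-2) * (3 - c / p) = Real.exp (-2) * ((2 - c / p) + 1) := by ring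
        _ ≤ Real.exp (-2) * Real.exp (2 - c / p) :=
            mul_le_mul_of_nonneg_left ha h2pos.le
        _ = Real.exp (-c / p) := by rw [← Real.exp_add]; ring_nf
    have he3 : Real.exp 1 < 3 := by
      have := Real.exp_one_lt_d9; linarith
    have h2 : Real.exp 1 * (p / c) + c / p ≤ 4 := by
      have hrw : Real.exp 1 * (p / c) + c / p
          = (Real.exp 1 * p * p + c * c) / (c * p) := by
        field_simp
      rw [hrw, div_le_iff₀ (by positivity)]
      nlinarith [mul_nonneg (sub_nonneg.mpr hpc) (sub_nonneg.mpr h.le),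
        mul_pos hp hc]
    have h3 : Real.exp (-1) * p / c = Real.exp (-2) * (Real.exp 1 * (p / c)) := by
      rw [hE]; ring
    rw [h3]
    nlinarith [h1, h2, h2pos]

/-- For A > 0, c > 0, the gap between the convex upper approximation
G̃ and G is uniformly bounded: G̃(p) − G(p) ≤ A·e⁻² for all p ≥ 0. -/
theorem stmt8 (A c : ℝ) (hA : 0 < A) (hc : 0 < c) :
    ∀ p : ℝ, 0 ≤ p →
      (if p < c then A * Real.exp (-1) * p / c else A * Real.exp (-c / p)) -
      (if p = 0 then (0 : ℝ) else A * Real.exp (-c / p)) ≤ A * Real.exp (-2) := by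
  intro p hp
  rcases eq_or_lt_of_le hp with h0 | hp0
  · rw [if_pos (by rw [← h0]; exact hc), if_pos h0.symm, ← h0]
    simp
    positivity
  · rw [if_neg (ne_of_gt hp0)]
    by_cases hpc : p < c
    · rw [if_pos hpc]
      have := key8 c p hc hp0 hpc.le
      have h4 : A * Real.exp (-1) * p / c - A * Real.exp (-c / p)
          = A * (Real.exp (-1) * p / c - Real.exp (-c / p)) := by ring
      rw [h4]
      exact mul_le_mul_of_nonneg_left this hA.le
    · rw [if_neg hpc]
      simp
      positivity
end

section
/- (Corollary 1) Let K ≥ 1, let A₁,…,A_K > 0 and c₁,…,c_K > 0, let r > 0 and p̄ > 0, and let F be the set of p ∈ ℝ^K with p₁ ≥ p₂ ≥ … ≥ p_K ≥ 0 and Σ_{k=1}^K (r+1)^{k−1} p_k ≤ p̄. Define G_k(p) = A_k·exp(−c_k/p) for p > 0 with G_k(0) = 0, and G̃_k(p) = A_k·e^{−1}·p/c_k for 0 ≤ p < c_k and G̃_k(p) = A_k·exp(−c_k/p) for p ≥ c_k. If p° ∈ F maximizes Σ_{k=1}^K G̃_k(p_k) over F, then for every p ∈ F, Σ_{k=1}^K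 G_k(p_k) ≤ Σ_{k=1}^K G_k(p°_k) + e^{−2}·Σ_{k=1}^K A_k. In other words, the suboptimality gap between the optimal value of the original problem (maximize Σ G_k over F) and the value achieved at the maximizer of the convex approximation is at most e^{−2} Σ_k A_k. -/
/-- The expected weighted age drop function: G(p) = A·exp(−c/p) for p > 0, G(0) = 0. -/
noncomputable def G (A c p : ℝ) : ℝ := if p = 0 then 0 else A * Real.exp (-c / p)

/-- Its convex upper approximation: G̃(p) = A·e⁻¹·p/c for p < c, A·exp(−c/p) for p ≥ c. -/
noncomputable def Gt (A c p : ℝ) : ℝ :=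
  if p < c then A * Real.exp (-1) * p / c else A * Real.exp (-c / p)

lemma G_le_Gt (A c p : ℝ) (hA : 0 < A) (hc : 0 < c) (hp : 0 ≤ p) :
    G A c p ≤ Gt A c p := by
  unfold G Gt
  rcases eq_or_lt_of_le hp with h0 | h0
  · simp [← h0, hc]
  · rw [if_neg (ne_of_gt h0)]
    by_cases h : p < c
    · rw [if_pos h]
      have h1 : c / p ≤ Real.exp (c / p - 1) := by
        have := Real.add_one_le_exp (c / p - 1); linarith
      have h2 : c ≤ Real.exp (c / p - 1) * p := by
        rw [div_le_iff₀ h0] at h1; linarith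
      have h4 : Real.exp (-c / p) * Real.exp (c / p - 1) = Real.exp (-1) := by
        rw [← Real.exp_add]; ring_nf
      have h3 : Real.exp (-c / p) * c ≤ Real.exp (-1) * p := by
        calc Real.exp (-c / p) * c ≤ Real.exp (-c / p) * (Real.exp (c / p - 1) * p) :=
              mul_le_mul_of_nonneg_left h2 (Real.exp_pos _).le
          _ = Real.exp (-c / p) * Real.exp (c / p - 1) * p := by ring
          _ = Real.exp (-1) * p := by rw [h4]
      rw [le_div_iff₀ hc]
      nlinarith [mul_le_mul_of_nonneg_left h3 hA.le]
    · rw [if_neg h]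

lemma Gt_le (A c p : ℝ) (hA : 0 < A) (hc : 0 < c) (hp : 0 ≤ p) :
    Gt A c p ≤ G A c p + A * Real.exp (-2) := by
  have hEpos := Real.exp_pos (1:ℝ)
  have hE2 : Real.exp (-2 : ℝ) = Real.exp (-1) * Real.exp (-1) := by
    rw [← Real.exp_add]; norm_num
  have hE1 : Real.exp (-1 : ℝ) * Real.exp 1 = 1 := by
    rw [← Real.exp_add]; norm_num
  unfold G Gt
  rcases eq_or_lt_of_le hp with h0 | h0
  · simp [← h0, hc]; positivity
  · rw [if_neg (ne_of_gt h0)]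
    by_cases h : p < c
    · rw [if_pos h]
      by_cases hx : Real.exp 1 * p ≤ c
      · have hG : 0 < A * Real.exp (-c / p) := by positivity
        have key : Real.exp (-1) * p / c ≤ Real.exp (-2) := by
          rw [div_le_iff₀ hc, hE2]
          have h5 : Real.exp (-1) * p = Real.exp (-1) * Real.exp (-1) * (Real.exp 1 * p) := by
            linear_combination (-(Real.exp (-1) * p)) * hE1
          rw [h5]
          exact mul_le_mul_of_nonneg_left hx (by positivity)
        have hk := mul_le_mul_of_nonneg_left key hA.le
        have heq : A * Real.exp (-1) * p / c = A * (Real.exp (-1) * p / c) := by ring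
        linarith [hk, hG]
      · push_neg at hx
        have h1 : -c / p + 3 ≤ Real.exp (-c / p + 2) := by
          have := Real.add_one_le_exp (-c / p + 2); linarith
        have h2 : Real.exp (-c / p + 2) = Real.exp (-c / p) * Real.exp 1 * Real.exp 1 := by
          rw [← Real.exp_add, ← Real.exp_add]; ring_nf
        have h3 : Real.exp (-2) * (3 - c / p) ≤ Real.exp (-c / p) := by
          rw [h2] at h1
          have hh := mul_le_mul_of_nonneg_left h1 (Real.exp_pos (-2 : ℝ)).le
          calc Real.exp (-2) * (3 - c / p) = Real.exp (-2) * (-c / p + 3) := by ring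
            _ ≤ Real.exp (-2) * (Real.exp (-c/p) * Real.exp 1 * Real.exp 1) := hh
            _ = Real.exp (-c/p) * ((Real.exp (-1) * Real.exp 1) * (Real.exp (-1) * Real.exp 1)) := by
                rw [hE2]; ring
            _ = Real.exp (-c/p) := by rw [hE1]; ring
        have e3 : Real.exp 1 < 3 := by
          have := Real.exp_one_lt_d9; linarith
        have hq : Real.exp 1 * p * p ≤ 4 * c * p - c * c := by
          nlinarith [mul_pos h0 hc, mul_pos h0 h0]
        have hE1' : Real.exp (-1) * Real.exp (-1) * Real.exp 1 = Real.exp (-1) := by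
          rw [mul_assoc, hE1, mul_one]
        have step : Real.exp (-1) * (p * p) ≤
            Real.exp (-1) * Real.exp (-1) * (4 * c * p - c * c) := by
          calc Real.exp (-1) * (p * p)
              = Real.exp (-1) * Real.exp (-1) * (Real.exp 1 * p * p) := by
                linear_combination (-(p * p)) * hE1'
            _ ≤ _ := mul_le_mul_of_nonneg_left hq (by positivity)
        have key : Real.exp (-1) * p / c ≤ Real.exp (-2) * (4 - c / p) := by
          rw [hE2, div_le_iff₀ hc]
          rw [show Real.exp (-1) * Real.exp (-1) * (4 - c / p) * c
              = Real.exp (-1) * Real.exp (-1) * (4 * c * p - c * c) / p from by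
            field_simp]
          rw [le_div_iff₀ h0]
          nlinarith [step]
        have hk := mul_le_mul_of_nonneg_left key hA.le
        have hh3 := mul_le_mul_of_nonneg_left h3 hA.le
        have heq : A * Real.exp (-1) * p / c = A * (Real.exp (-1) * p / c) := by ring
        have heq2 : A * (Real.exp (-2) * (4 - c / p))
            = A * (Real.exp (-2) * (3 - c / p)) + A * Real.exp (-2) := by ring
        linarith [hk, hh3]
    · rw [if_neg h]
      nlinarith [Real.exp_pos (-2:ℝ)]


/-- Corollary 1: if p° ∈ F maximizes ∑ G̃ₖ over the feasible set F
(ordered nonnegative vectors with ∑ (r+1)^{k−1} pₖ ≤ p̄), then for every p ∈ F,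
∑ Gₖ(pₖ) ≤ ∑ Gₖ(p°ₖ) + e⁻²·∑ Aₖ. -/
theorem stmt9 (K : ℕ) (hK : 1 ≤ K) (A c : Fin K → ℝ)
    (hA : ∀ k, 0 < A k) (hc : ∀ k, 0 < c k)
    (r pbar : ℝ) (hr : 0 < r) (hpbar : 0 < pbar)
    (F : Set (Fin K → ℝ))
    (hF : F = {p : Fin K → ℝ |
      (∀ i j : Fin K, i ≤ j → p j ≤ p i) ∧ (∀ k, 0 ≤ p k) ∧
      ∑ k : Fin K, ((r + 1) ^ (k : ℕ)) * p k ≤ pbar})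
    (po : Fin K → ℝ) (hpo : po ∈ F)
    (hmax : ∀ p ∈ F, ∑ k, Gt (A k) (c k) (p k) ≤ ∑ k, Gt (A k) (c k) (po k)) :
    ∀ p ∈ F, ∑ k, G (A k) (c k) (p k) ≤
      ∑ k, G (A k) (c k) (po k) + Real.exp (-2) * ∑ k, A k := by
  intro p hpF
  have hp' := hpF
  have hpo' := hpo
  rw [hF] at hp' hpo'
  obtain ⟨-, hpn, -⟩ := hp'
  obtain ⟨-, hpon, -⟩ := hpo'
  calc ∑ k, G (A k) (c k) (p k) ≤ ∑ k, Gt (A k) (c k) (p k) :=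
        Finset.sum_le_sum fun k _ => G_le_Gt _ _ _ (hA k) (hc k) (hpn k)
    _ ≤ ∑ k, Gt (A k) (c k) (po k) := hmax p hpF
    _ ≤ ∑ k, (G (A k) (c k) (po k) + A k * Real.exp (-2)) :=
        Finset.sum_le_sum fun k _ => Gt_le _ _ _ (hA k) (hc k) (hpon k)
    _ = ∑ k, G (A k) (c k) (po k) + Real.exp (-2) * ∑ k, A k := by
        rw [Finset.sum_add_distrib, ← Finset.sum_mul, mul_comm]
end

section
/- (Lemma 1) Let K ≥ 1, let A₁,…,A_K > 0 and c₁,…,c_K > 0, let r > 0 and p̄ > 0. Define the objective f(p) = Σ_{k=1}^K A_k·exp(−c_k·max_{1≤t≤k} (1/p_t)) for p ∈ ℝ^K with all p_k > 0. Then the supremum of f over the set F₀ = {p ∈ ℝ^K : p_k > 0 for all k, Σ_{k=1}^K (r+1)^{k−1} p_k ≤ p̄} equals the supremum of f over the smaller set F₀ ∩ {p : p₁ ≥ p₂ ≥ … ≥ p_K}; that is, adding the ordering constraint p₁ ≥ p₂ ≥ … ≥ p_K does not change the optimal objective value. -/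
/-!
Replacing each power `p k` by the running minimum `q k = min_{t ≤ k} p t` yields an
ordered vector that still satisfies the power constraint (the weights are nonnegative and
`q ≤ p`) and has the same objective value, because `max_{t ≤ k} 1 / q t` and
`max_{t ≤ k} 1 / p t` both equal `1 / q k`. Hence both feasible sets have the same image
under the objective.
-/

open Finset

section PrefixInf

variable {ι α : Type*} [LinearOrder ι] [LocallyFiniteOrderBot ι] [LinearOrder α]

lemma Finset.self_mem_Iic (k : ι) : k ∈ Iic k := mem_Iic.mpr le_rfl

def prefixInf (p : ι → α) (k : ι) : α := (Iic k).inf' ⟨k, self_mem_Iic k⟩ p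

lemma prefixInf_le_self (p : ι → α) (k : ι) : prefixInf p k ≤ p k :=
  inf'_le p (self_mem_Iic k)

lemma prefixInf_antitone (p : ι → α) : Antitone (prefixInf p) := fun _ _ hij =>
  le_inf' _ _ fun _ ht => inf'_le p (mem_Iic.mpr ((mem_Iic.mp ht).trans hij))

lemma exists_le_eq_prefixInf (p : ι → α) (k : ι) : ∃ s ≤ k, prefixInf p k = p s := by
  obtain ⟨s, hs, h⟩ := exists_mem_eq_inf' ⟨k, self_mem_Iic k⟩ p
  exact ⟨s, mem_Iic.mp hs, h⟩

lemma prefixInf_prefixInf (p : ι → α) : prefixInf (prefixInf p) = prefixInf p := by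
  funext k
  obtain ⟨s, hsk, hs⟩ := exists_le_eq_prefixInf (prefixInf p) k
  exact le_antisymm (prefixInf_le_self _ k) (hs ▸ prefixInf_antitone p hsk)

lemma prefixInf_pos [Zero α] {p : ι → α} (hp : ∀ t, 0 < p t) (k : ι) : 0 < prefixInf p k :=
  (lt_inf'_iff _).mpr fun t _ => hp t

lemma sup'_Iic_one_div_eq_one_div_prefixInf {p : ι → ℝ} (hp : ∀ t, 0 < p t) (k : ι) :
    (Iic k).sup' ⟨k, self_mem_Iic k⟩ (fun t => 1 / p t) = 1 / prefixInf p k := by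
  obtain ⟨s, hsk, hs⟩ := exists_le_eq_prefixInf p k
  refine le_antisymm (sup'_le _ _ fun t ht => ?_) ?_
  · exact one_div_le_one_div_of_le (prefixInf_pos hp k) (inf'_le p ht)
  · rw [hs]
    exact le_sup' (fun t => 1 / p t) (mem_Iic.mpr hsk)

lemma sup'_Iic_one_div_prefixInf {p : ι → ℝ} (hp : ∀ t, 0 < p t) (k : ι) :
    (Iic k).sup' ⟨k, self_mem_Iic k⟩ (fun t => 1 / prefixInf p t) =
      (Iic k).sup' ⟨k, self_mem_Iic k⟩ (fun t => 1 / p t) := by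
  rw [sup'_Iic_one_div_eq_one_div_prefixInf (prefixInf_pos hp), prefixInf_prefixInf,
    sup'_Iic_one_div_eq_one_div_prefixInf hp]

lemma sum_mul_prefixInf_le [Fintype ι] {w : ι → ℝ} (hw : ∀ k, 0 ≤ w k) (p : ι → ℝ) :
    ∑ k, w k * prefixInf p k ≤ ∑ k, w k * p k :=
  sum_le_sum fun k _ => mul_le_mul_of_nonneg_left (prefixInf_le_self p k) (hw k)

end PrefixInf

theorem stmt10_general (K : ℕ) (A c : Fin K → ℝ)
    (r pbar : ℝ) (hr : 0 < r)
    (f : (Fin K → ℝ) → ℝ)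
    (hf : ∀ p, f p = ∑ k, A k * Real.exp (-(c k) *
      (Finset.Iic k).sup' ⟨k, Finset.mem_Iic.mpr le_rfl⟩ (fun t => 1 / p t)))
    (F0 : Set (Fin K → ℝ))
    (hF0 : F0 = {p | (∀ k, 0 < p k) ∧ ∑ k : Fin K, ((r + 1) ^ (k : ℕ)) * p k ≤ pbar}) :
    sSup (f '' F0) = sSup (f '' (F0 ∩ {p | ∀ i j : Fin K, i ≤ j → p j ≤ p i})) := by
  subst hF0
  refine congrArg sSup (Set.Subset.antisymm ?_ (Set.image_mono Set.inter_subset_left))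
  rintro _ ⟨p, ⟨hp, hbudget⟩, rfl⟩
  have hweights (k : Fin K) : 0 ≤ (r + 1) ^ (k : ℕ) := by positivity
  refine ⟨prefixInf p, ⟨⟨prefixInf_pos hp, ?_⟩, fun _ _ => (prefixInf_antitone p ·)⟩, ?_⟩
  · exact (sum_mul_prefixInf_le hweights p).trans hbudget
  · simp only [hf, sup'_Iic_one_div_prefixInf hp]

/-- Lemma 1: for the objective
f(p) = ∑ₖ Aₖ·exp(−cₖ·max_{t≤k} 1/pₜ), the supremum of f over
F₀ = {p : pₖ > 0 ∀k, ∑ (r+1)^{k−1} pₖ ≤ p̄} equals the supremum of f over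
F₀ intersected with the ordering constraint p₁ ≥ p₂ ≥ … ≥ p_K. -/
theorem stmt10 (K : ℕ) (hK : 1 ≤ K) (A c : Fin K → ℝ)
    (hA : ∀ k, 0 < A k) (hc : ∀ k, 0 < c k)
    (r pbar : ℝ) (hr : 0 < r) (hpbar : 0 < pbar)
    (f : (Fin K → ℝ) → ℝ)
    (hf : ∀ p, f p = ∑ k, A k * Real.exp (-(c k) *
      (Finset.Iic k).sup' ⟨k, Finset.mem_Iic.mpr le_rfl⟩ (fun t => 1 / p t)))
    (F0 : Set (Fin K → ℝ))
    (hF0 : F0 = {p | (∀ k, 0 < p k) ∧ ∑ k : Fin K, ((r + 1) ^ (k : ℕ)) * p k ≤ pbar}) :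
    sSup (f '' F0) = sSup (f '' (F0 ∩ {p | ∀ i j : Fin K, i ≤ j → p j ≤ p i})) :=
  stmt10_general K A c r pbar hr f hf F0 hF0
end

section
/- Let K ≥ 1 and let r be any real number. For p₁,…,p_K ∈ ℝ define p̂_k = p_k − r·Σ_{i=k+1}^K p_i for k = 1,…,K. Then the original variables are recovered from the transformed ones by p_k = p̂_k + r·Σ_{i=k+1}^K (r+1)^{i−k−1}·p̂_i for every k = 1,…,K; i.e., the map (p₁,…,p_K) ↦ (p̂₁,…,p̂_K) is invertible with this explicit inverse. -/
/-- Sum over Ioi in Fin K equals sum over Ico in ℕ. -/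
lemma fin_Ioi_sum {K : ℕ} (k : Fin K) (f : Fin K → ℝ) :
    ∑ i ∈ Finset.Ioi k, f i
      = ∑ j ∈ Finset.Ico ((k : ℕ) + 1) K, if h : j < K then f ⟨j, h⟩ else 0 := by
  refine Finset.sum_bij' (fun i _ => (i : ℕ)) (fun j hj => ⟨j, (Finset.mem_Ico.mp hj).2⟩)
    ?_ ?_ ?_ ?_ ?_
  · intro i hi
    simp only [Finset.mem_Ioi] at hi
    simp [Finset.mem_Ico, Nat.succ_le_iff, hi, i.isLt, Fin.lt_iff_val_lt_val] at *
  · intro j hj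
    simp only [Finset.mem_Ico] at hj
    simp [Finset.mem_Ioi, Fin.lt_iff_val_lt_val]
    omega
  · intro i hi; rfl
  · intro j hj; rfl
  · intro i hi; simp [i.isLt]

lemma aux (K : ℕ) (r : ℝ) (q qh : ℕ → ℝ)
    (h : ∀ i, i < K → qh i = q i - r * ∑ j ∈ Finset.Ico (i + 1) K, q j) :
    ∀ n k, K ≤ k + n →
      ∑ i ∈ Finset.Ico k K, (r + 1) ^ (i - k) * qh i = ∑ i ∈ Finset.Ico k K, q i := by
  intro n
  induction n with
  | zero => intro k hk; rw [Finset.Ico_eq_empty (by omega)]; simp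
  | succ n ih =>
    intro k hk
    by_cases hkK : K ≤ k
    · rw [Finset.Ico_eq_empty (by omega)]; simp
    push_neg at hkK
    rw [show Finset.Ico k K = insert k (Finset.Ico (k+1) K) by
      ext x; simp only [Finset.mem_Ico, Finset.mem_insert]; omega]
    rw [Finset.sum_insert (by simp), Finset.sum_insert (by simp)]
    have h1 : ∑ i ∈ Finset.Ico (k+1) K, (r + 1) ^ (i - k) * qh i
        = (r + 1) * ∑ i ∈ Finset.Ico (k+1) K, (r + 1) ^ (i - (k+1)) * qh i := by
      rw [Finset.mul_sum]
      apply Finset.sum_congr rfl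
      intro i hi
      simp only [Finset.mem_Ico] at hi
      rw [← mul_assoc, ← pow_succ']
      congr 2
      omega
    rw [h1, ih (k+1) (by omega), h k hkK]
    simp only [Nat.sub_self, pow_zero, one_mul]
    ring

/-- with p̂ₖ = pₖ − r·∑_{i>k} pᵢ, the original variables are
recovered by pₖ = p̂ₖ + r·∑_{i>k} (r+1)^{i−k−1}·p̂ᵢ for every k. -/
theorem stmt13 (K : ℕ) (hK : 1 ≤ K) (r : ℝ) (p : Fin K → ℝ)
    (phat : Fin K → ℝ)
    (hphat : ∀ k, phat k = p k - r * ∑ i ∈ Finset.Ioi k, p i) :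
    ∀ k : Fin K, p k = phat k + r * ∑ i ∈ Finset.Ioi k,
      (r + 1) ^ ((i : ℕ) - (k : ℕ) - 1) * phat i := by
  set q : ℕ → ℝ := fun j => if h : j < K then p ⟨j, h⟩ else 0 with hq
  set qh : ℕ → ℝ := fun j => if h : j < K then phat ⟨j, h⟩ else 0 with hqh
  have hrel : ∀ i, i < K → qh i = q i - r * ∑ j ∈ Finset.Ico (i + 1) K, q j := by
    intro i hi
    simp only [hqh, hq, dif_pos hi]
    rw [hphat ⟨i, hi⟩, fin_Ioi_sum]
  intro k
  have key := aux K r q qh hrel K ((k:ℕ)+1) (by omega)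
  have hs1 : ∑ i ∈ Finset.Ioi k, (r + 1) ^ ((i : ℕ) - (k : ℕ) - 1) * phat i
      = ∑ i ∈ Finset.Ico ((k:ℕ)+1) K, (r + 1) ^ (i - ((k:ℕ)+1)) * qh i := by
    rw [fin_Ioi_sum k (fun i => (r + 1) ^ ((i : ℕ) - (k : ℕ) - 1) * phat i)]
    apply Finset.sum_congr rfl
    intro j hj
    simp only [Finset.mem_Ico] at hj
    simp only [hqh, dif_pos hj.2]
    rw [Nat.sub_sub]
  have hs2 : ∑ i ∈ Finset.Ioi k, p i = ∑ i ∈ Finset.Ico ((k:ℕ)+1) K, q i := by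
    rw [fin_Ioi_sum]
  rw [hphat k, hs1, key, ← hs2]
  ring
end

section
/- Let X be a real random variable with the exponential distribution of rate 1, let d > 0, τ ∈ ℝ, ρ > 0, R > 0 be real constants, set r = 2^R − 1, and let α₁ > 0, α₂ be real with α₂ − α₁·r > 0. Then ℙ( (α₂·d^{−τ}·X)/(α₁·d^{−τ}·X + 1/ρ) ≥ r and α₁·d^{−τ}·X·ρ ≥ r ) = exp( −max{ r·d^τ/(ρ(α₂ − α₁·r)), r·d^τ/(ρ·α₁) } ); i.e., the NOMA outage probability of the near user performing successive interference cancellation equals 1 − exp(−max{(2^R−1)d^τ/(ρ(α₂−α₁(2^R−1))), (2^R−1)d^τ/(ρα₁)}). -/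
/-!
Both decoding conditions are lower thresholds on the channel gain `|h|² = d^{-τ} X`: the SNR
condition reads `|h|² ≥ r / (ρ α₁)`, and, because `α₂ - α₁ r > 0`, clearing the SINR denominator
turns the SINR condition into `|h|² ≥ r / (ρ (α₂ - α₁ r))`. The event is therefore
`{X ≥ max(…)}` with a positive threshold, whose probability is the exponential tail `exp (-max(…))`;
the law is given on open tails `{X > x}`, and the closed tail is their limit from the left.
-/

open MeasureTheory Filter Topology Set

theorem tendsto_measure_setOf_lt_nhdsLT {Ω : Type*} [MeasurableSpace Ω] {μ : Measure Ω}
    [IsFiniteMeasure μ] {X : Ω → ℝ} (hX : Measurable X) (m : ℝ) :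
    Tendsto (fun t ↦ μ {ω | t < X ω}) (𝓝[<] m) (𝓝 (μ {ω | m ≤ X ω})) := by
  -- `t ↑ m` in `ℝ` is `t ↓ m` in `ℝᵒᵈ`, where the sets `{t < X}` increase as `t` grows.
  have key := tendsto_measure_biInter_gt (μ := μ) (ι := ℝᵒᵈ) (a := OrderDual.toDual m)
    (s := fun t ↦ {ω | OrderDual.ofDual t < X ω})
    (fun _ _ ↦ (measurableSet_lt measurable_const hX).nullMeasurableSet)
    (fun i j _ hij _ hω ↦ (show OrderDual.ofDual j ≤ OrderDual.ofDual i from hij).trans_lt hω)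
    ⟨OrderDual.toDual (m - 1), show m - 1 < m by linarith, measure_ne_top _ _⟩
  have hinter : ⋂ t > OrderDual.toDual m, {ω | OrderDual.ofDual t < X ω} = {ω | m ≤ X ω} := by
    ext ω
    simp only [mem_iInter, mem_ofPred_eq]
    exact ⟨fun h ↦ le_of_forall_lt fun t ht ↦ h (OrderDual.toDual t) ht,
      fun h t ht ↦ (show OrderDual.ofDual t < m from ht).trans_le h⟩
  rwa [hinter] at key

theorem measure_setOf_le_eq_exp_neg {Ω : Type*} [MeasurableSpace Ω] {μ : Measure Ω}
    [IsFiniteMeasure μ] {X : Ω → ℝ} (hX : Measurable X)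
    (hlaw : ∀ x : ℝ, 0 ≤ x → μ {ω | x < X ω} = ENNReal.ofReal (Real.exp (-x)))
    {m : ℝ} (hm : 0 < m) :
    μ {ω | m ≤ X ω} = ENNReal.ofReal (Real.exp (-m)) := by
  refine tendsto_nhds_unique (tendsto_measure_setOf_lt_nhdsLT hX m) ?_
  have htail : Continuous fun t : ℝ ↦ ENNReal.ofReal (Real.exp (-t)) :=
    ENNReal.continuous_ofReal.comp (Real.continuous_exp.comp continuous_neg)
  refine (htail.tendsto m).mono_left nhdsWithin_le_nhds |>.congr' ?_
  filter_upwards [Ioo_mem_nhdsLT hm] with t ht using (hlaw t ht.1.le).symm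

theorem le_sinr_iff {r α₁ α₂ ρ g : ℝ} (hρ : 0 < ρ) (hα₁ : 0 ≤ α₁) (hpos : 0 < α₂ - α₁ * r)
    (hg : 0 ≤ g) : r ≤ α₂ * g / (α₁ * g + 1 / ρ) ↔ r / (ρ * (α₂ - α₁ * r)) ≤ g := by
  have hclear : r * (α₁ * g + 1 / ρ) = (r + r * α₁ * g * ρ) / ρ := by field_simp; ring
  rw [le_div_iff₀ (by positivity), div_le_iff₀ (by positivity), hclear, div_le_iff₀ hρ]
  constructor <;> intro h <;> linarith

theorem sic_decoding_iff {r α₁ α₂ ρ g : ℝ} (hρ : 0 < ρ) (hr : 0 < r) (hα₁ : 0 < α₁)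
    (hpos : 0 < α₂ - α₁ * r) :
    (r ≤ α₂ * g / (α₁ * g + 1 / ρ) ∧ r ≤ α₁ * g * ρ) ↔
      r / (ρ * (α₂ - α₁ * r)) ≤ g ∧ r / (ρ * α₁) ≤ g := by
  have hsnr : r ≤ α₁ * g * ρ ↔ r / (ρ * α₁) ≤ g := by
    rw [div_le_iff₀ (by positivity), show g * (ρ * α₁) = α₁ * g * ρ by ring]
  rw [hsnr]
  exact and_congr_left fun hg ↦ le_sinr_iff hρ hα₁.le hpos ((div_pos hr (by positivity)).le.trans hg)

/-- if X is exponential with rate 1, r = 2^R − 1, α₁ > 0 and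
α₂ − α₁·r > 0, then the probability that the near user (performing SIC) decodes
both the far user's message and its own,
ℙ(α₂·d^{−τ}·X/(α₁·d^{−τ}·X + 1/ρ) ≥ r and α₁·d^{−τ}·X·ρ ≥ r),
equals exp(−max{r·d^τ/(ρ(α₂ − α₁·r)), r·d^τ/(ρ·α₁)}). -/
theorem stmt16 {Ω : Type*} [MeasurableSpace Ω] (μ : Measure Ω) [IsProbabilityMeasure μ]
    (X : Ω → ℝ) (hXm : Measurable X)
    (hlaw : ∀ x : ℝ, 0 ≤ x → μ {ω | x < X ω} = ENNReal.ofReal (Real.exp (-x)))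
    (d τ ρ R r : ℝ) (hd : 0 < d) (hρ : 0 < ρ) (hR : 0 < R)
    (hr : r = (2 : ℝ) ^ R - 1)
    (α₁ α₂ : ℝ) (hα₁ : 0 < α₁) (hpos : 0 < α₂ - α₁ * r) :
    μ {ω | r ≤ α₂ * d ^ (-τ) * X ω / (α₁ * d ^ (-τ) * X ω + 1 / ρ) ∧
           r ≤ α₁ * d ^ (-τ) * X ω * ρ} =
      ENNReal.ofReal (Real.exp
        (-(max (r * d ^ τ / (ρ * (α₂ - α₁ * r))) (r * d ^ τ / (ρ * α₁))))) := by
  have hr0 : 0 < r := hr ▸ sub_pos.2 (Real.one_lt_rpow one_lt_two hR)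
  have he : 0 < d ^ τ := Real.rpow_pos_of_pos hd τ
  have hrescale : ∀ K > 0, ∀ x : ℝ, r * d ^ τ / K ≤ x ↔ r / K ≤ d ^ (-τ) * x := fun K _ x ↦ by
    rw [Real.rpow_neg hd.le, inv_mul_eq_div, le_div_iff₀ he, div_mul_eq_mul_div]
  have hevent : {ω | r ≤ α₂ * d ^ (-τ) * X ω / (α₁ * d ^ (-τ) * X ω + 1 / ρ) ∧
      r ≤ α₁ * d ^ (-τ) * X ω * ρ} =
      {ω | max (r * d ^ τ / (ρ * (α₂ - α₁ * r))) (r * d ^ τ / (ρ * α₁)) ≤ X ω} := by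
    ext ω
    rw [mem_ofPred_eq, mem_ofPred_eq, max_le_iff, hrescale _ (by positivity),
      hrescale _ (by positivity), mul_assoc α₂, mul_assoc α₁]
    exact sic_decoding_iff hρ hr0 hα₁ hpos
  rw [hevent]
  exact measure_setOf_le_eq_exp_neg hXm hlaw (lt_max_of_lt_right (by positivity))
end

section
/- Let K ≥ 1 be an integer, r > 0 and σ² > 0 real, p₁,…,p_K ≥ 0 real, and let k ∈ {1,…,K} be such that p̂_t := p_t − r·Σ_{i=t+1}^K p_i > 0 for every t = 1,…,k. Then for every real x > 0 the following equivalence holds: [ x·p_t / ( x·Σ_{i=t+1}^K p_i + σ² ) ≥ r for all t = 1,…,k ] if and only if [ x ≥ r·σ²·max_{1≤t≤k} (1/p̂_t) ]. Consequently, for a channel gain x·d^{−τ} with x exponentially distributed of rate 1, the success probability of client m(k) decoding all messages of indices t ≤ k equals exp(−d^τ·r·σ²·max_{1≤t≤k} 1/p̂_t). -/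
/-!
Clearing the denominator, the `t`-th SINR condition `r ≤ x p_t / (x S_t + σ²)` with
interference `S_t = ∑_{i>t} p_i` reads `r σ² ≤ x (p_t - r S_t) = x p̂_t`, i.e.
`r σ² / p̂_t ≤ x`, and all of them together say `r σ² max_t (1/p̂_t) ≤ x`. For the success
probability, `x = X d^{-τ}` with `X > 0` almost surely, so the event is
`{d^τ r σ² max_t (1/p̂_t) ≤ X}`, whose probability is the exponential tail at that threshold.
-/

open MeasureTheory Filter Topology

lemma le_sinr_iff_s17 {x p S r σ2 : ℝ} (hden : 0 < x * S + σ2) (hphat : 0 < p - r * S) :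
    r ≤ x * p / (x * S + σ2) ↔ r * σ2 * (1 / (p - r * S)) ≤ x := by
  rw [le_div_iff₀ hden, mul_one_div, div_le_iff₀ hphat]
  constructor <;> intro h <;> linarith

lemma forall_le_sinr_iff {ι : Type*} {s : Finset ι} (hs : s.Nonempty) {p S : ι → ℝ}
    {x r σ2 : ℝ} (hx : 0 ≤ x) (hr : 0 ≤ r) (hσ2 : 0 < σ2) (hS : ∀ t ∈ s, 0 ≤ S t)
    (hphat : ∀ t ∈ s, 0 < p t - r * S t) :
    (∀ t ∈ s, r ≤ x * p t / (x * S t + σ2)) ↔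
      r * σ2 * s.sup' hs (fun t => 1 / (p t - r * S t)) ≤ x := by
  rw [Finset.mul₀_sup' (by positivity), Finset.sup'_le_iff]
  refine forall₂_congr fun t ht => le_sinr_iff_s17 ?_ (hphat t ht)
  have := hS t ht
  positivity

lemma measure_le_eq_exp_of_tail {Ω : Type*} [MeasurableSpace Ω] {μ : Measure Ω} {X : Ω → ℝ}
    (hlaw : ∀ x : ℝ, 0 ≤ x → μ {ω | x < X ω} = ENNReal.ofReal (Real.exp (-x)))
    {c : ℝ} (hc : 0 < c) :
    μ {ω | c ≤ X ω} = ENNReal.ofReal (Real.exp (-c)) := by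
  refine le_antisymm ?_ ?_
  · have hcont : Tendsto (fun y => ENNReal.ofReal (Real.exp (-y))) (𝓝[<] c)
        (𝓝 (ENNReal.ofReal (Real.exp (-c)))) :=
      (ENNReal.continuous_ofReal.comp (Real.continuous_exp.comp continuous_neg)).continuousAt
        |>.tendsto.mono_left nhdsWithin_le_nhds
    refine ge_of_tendsto hcont ?_
    filter_upwards [Ioo_mem_nhdsLT hc] with y hy
    rw [← hlaw y hy.1.le]
    exact measure_mono fun ω (hω : c ≤ X ω) => show y < X ω by linarith [hy.2]
  · rw [← hlaw c hc.le]
    exact measure_mono fun ω (hω : c < X ω) => show c ≤ X ω from hω.le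

theorem stmt17_general {Ω : Type*} [MeasurableSpace Ω] (μ : Measure Ω) [IsProbabilityMeasure μ]
    (X : Ω → ℝ) (hXm : Measurable X)
    (hlaw : ∀ x : ℝ, 0 ≤ x → μ {ω | x < X ω} = ENNReal.ofReal (Real.exp (-x)))
    (K : ℕ) (r σ2 : ℝ) (hr : 0 < r) (hσ2 : 0 < σ2)
    (p : Fin K → ℝ) (hp : ∀ t, 0 ≤ p t) (k : Fin K)
    (phat : Fin K → ℝ)
    (hphatdef : ∀ t, phat t = p t - r * ∑ i ∈ Finset.Ioi t, p i)
    (hphat : ∀ t ≤ k, 0 < phat t)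
    (d τ : ℝ) (hd : 0 < d) :
    (∀ x : ℝ, 0 < x →
      ((∀ t ≤ k, r ≤ x * p t / (x * ∑ i ∈ Finset.Ioi t, p i + σ2)) ↔
        r * σ2 * (Finset.Iic k).sup' ⟨k, Finset.mem_Iic.mpr le_rfl⟩
          (fun t => 1 / phat t) ≤ x)) ∧
    μ {ω | ∀ t ≤ k, r ≤ (X ω * d ^ (-τ)) * p t /
        ((X ω * d ^ (-τ)) * ∑ i ∈ Finset.Ioi t, p i + σ2)} =
      ENNReal.ofReal (Real.exp (-(d ^ τ * r * σ2 *
        (Finset.Iic k).sup' ⟨k, Finset.mem_Iic.mpr le_rfl⟩ (fun t => 1 / phat t)))) := by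
  obtain rfl : phat = fun t => p t - r * ∑ i ∈ Finset.Ioi t, p i := funext hphatdef
  set M := (Finset.Iic k).sup' ⟨k, Finset.mem_Iic.mpr le_rfl⟩
    (fun t => 1 / (p t - r * ∑ i ∈ Finset.Ioi t, p i))
  have hM : 0 < M := (Finset.lt_sup'_iff _).2
    ⟨k, Finset.mem_Iic.mpr le_rfl, one_div_pos.mpr (hphat k le_rfl)⟩
  have hdecode : ∀ x : ℝ, 0 < x →
      ((∀ t ≤ k, r ≤ x * p t / (x * ∑ i ∈ Finset.Ioi t, p i + σ2)) ↔
        r * σ2 * M ≤ x) := by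
    intro x hx
    simpa only [Finset.mem_Iic] using forall_le_sinr_iff _ hx.le hr.le hσ2
      (fun t _ => Finset.sum_nonneg fun i _ => hp i)
      (fun t ht => hphat t (Finset.mem_Iic.mp ht))
  refine ⟨hdecode, ?_⟩
  have hpos : ∀ᵐ ω ∂μ, 0 < X ω :=
    (ae_iff_measure_eq (p := fun ω => 0 < X ω) (hXm measurableSet_Ioi).nullMeasurableSet).2
      (by simpa using hlaw 0 le_rfl)
  have hevent : {ω | ∀ t ≤ k, r ≤ (X ω * d ^ (-τ)) * p t /
        ((X ω * d ^ (-τ)) * ∑ i ∈ Finset.Ioi t, p i + σ2)} =ᵐ[μ]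
      {ω | d ^ τ * r * σ2 * M ≤ X ω} := by
    filter_upwards [hpos] with ω hω
    have hx : 0 < X ω * d ^ (-τ) := mul_pos hω (Real.rpow_pos_of_pos hd _)
    change (∀ t ≤ k, _) = (d ^ τ * r * σ2 * M ≤ X ω)
    rw [eq_iff_iff, hdecode _ hx, Real.rpow_neg hd.le, ← div_eq_mul_inv,
      le_div_iff₀ (Real.rpow_pos_of_pos hd τ)]
    ring_nf
  rw [measure_congr hevent, measure_le_eq_exp_of_tail hlaw (by positivity)]

/-- with p̂ₜ = pₜ − r·∑_{i>t} pᵢ > 0 for all t ≤ k, for every x > 0: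
[x·pₜ/(x·∑_{i>t} pᵢ + σ²) ≥ r for all t ≤ k] iff [x ≥ r·σ²·max_{t≤k} 1/p̂ₜ].
Consequently, for a channel gain X·d^{−τ} with X exponential of rate 1, the
success probability of client m(k) decoding all messages of indices t ≤ k equals
exp(−d^τ·r·σ²·max_{t≤k} 1/p̂ₜ). -/
theorem stmt17 {Ω : Type*} [MeasurableSpace Ω] (μ : Measure Ω) [IsProbabilityMeasure μ]
    (X : Ω → ℝ) (hXm : Measurable X)
    (hlaw : ∀ x : ℝ, 0 ≤ x → μ {ω | x < X ω} = ENNReal.ofReal (Real.exp (-x)))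
    (K : ℕ) (hK : 1 ≤ K) (r σ2 : ℝ) (hr : 0 < r) (hσ2 : 0 < σ2)
    (p : Fin K → ℝ) (hp : ∀ t, 0 ≤ p t) (k : Fin K)
    (phat : Fin K → ℝ)
    (hphatdef : ∀ t, phat t = p t - r * ∑ i ∈ Finset.Ioi t, p i)
    (hphat : ∀ t ≤ k, 0 < phat t)
    (d τ : ℝ) (hd : 0 < d) :
    (∀ x : ℝ, 0 < x →
      ((∀ t ≤ k, r ≤ x * p t / (x * ∑ i ∈ Finset.Ioi t, p i + σ2)) ↔
        r * σ2 * (Finset.Iic k).sup' ⟨k, Finset.mem_Iic.mpr le_rfl⟩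
          (fun t => 1 / phat t) ≤ x)) ∧
    μ {ω | ∀ t ≤ k, r ≤ (X ω * d ^ (-τ)) * p t /
        ((X ω * d ^ (-τ)) * ∑ i ∈ Finset.Ioi t, p i + σ2)} =
      ENNReal.ofReal (Real.exp (-(d ^ τ * r * σ2 *
        (Finset.Iic k).sup' ⟨k, Finset.mem_Iic.mpr le_rfl⟩ (fun t => 1 / phat t)))) :=
  stmt17_general μ X hXm hlaw K r σ2 hr hσ2 p hp k phat hphatdef hphat d τ hd
end
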